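/- arXiv:2009.11170 — 2 statements merged into one kernel-verified Lean document; each statement's English description precedes it below -/
import Mathlib

section
/- Let (G,K) be a compact Gelfand pair, ρ a nontrivial K-spherical irreducible unitary representation of G, Y a finite multiset on K that is a (ρ|_K)-design on K, and Ω a nonempty finite multiset on G with ∑_{z∈Ω} Z_ρ(z) = 0. Then the multiset X := Y · Ω · Y = { y₁ z y₂ : y₁ ∈ Y, z ∈ Ω, y₂ ∈ Y } satisfies ∑_{x∈X} ρ(x) = 0, i.e., X is a ρ-design on G. -/
/-!
Write `B = ∑_{y ∈ Y} ρ(y)` and `C = ∑_{z ∈ Ω} ρ(z)`, so that `∑_{x ∈ X} ρ(x) = B C B`.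
By the design property `B = |Y| P` with `P = ∫_K ρ`. Left invariance of the Haar measure makes
every `P v` a `K`-fixed vector; the fixed space is the line through the unit vector `w`, and
`⟨w, ρ(k) v⟩ = ⟨w, v⟩` by unitarity, so `P v = ⟨w, v⟩ w`. Hence
`P C P v = ⟨w, v⟩ ⟨w, C w⟩ w = 0`. In the same way `∫_G ρ` maps every vector to a `G`-fixed
one, which vanishes because `ρ` is irreducible and nontrivial; so `X` is a `ρ`-design.
-/

open MeasureTheory

noncomputable section

def IsDesign {G V : Type*} [Group G] [TopologicalSpace G] [MeasurableSpace G]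
    [NormedAddCommGroup V] [NormedSpace ℂ V]
    (μ : Measure G) (ρ : G →* (V →L[ℂ] V)) (X : Multiset G) : Prop :=
  (X.card : ℂ)⁻¹ • (X.map fun x => ρ x).sum = ∫ g, ρ g ∂μ

/-- The submodule of `K`-fixed vectors of a representation `ρ` of `G`. -/
def fixedSubmodule {G V : Type*} [Group G] [NormedAddCommGroup V] [NormedSpace ℂ V]
    (K : Subgroup G) (ρ : G →* (V →L[ℂ] V)) : Submodule ℂ V where
  carrier := {v | ∀ k ∈ K, ρ k v = v}
  add_mem' := by
    intro a b ha hb k hk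
    rw [map_add, ha k hk, hb k hk]
  zero_mem' := by
    intro k hk
    rw [map_zero]
  smul_mem' := by
    intro c v hv k hk
    rw [_root_.map_smul, hv k hk]

open scoped InnerProductSpace

theorem Multiset.sum_bind_bind_map_mul_mul {α β γ R : Type*} [NonUnitalNonAssocSemiring R]
    (S : Multiset α) (T : Multiset β) (U : Multiset γ) (f : α → R) (g : β → R) (h : γ → R) :
    (S.bind fun a => T.bind fun b => U.map fun c => f a * g b * h c).sum =
      (S.map f).sum * (T.map g).sum * (U.map h).sum := by
  simp only [Multiset.sum_bind, Multiset.sum_map_mul_left, Multiset.sum_map_mul_right]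

section Representation

variable {H V : Type*} [Group H] [NormedAddCommGroup V] [NormedSpace ℂ V]
  (ρ : H →* (V →L[ℂ] V))

theorem mul_integral_eq_integral [CompleteSpace V] [MeasurableSpace H] [MeasurableMul H]
    (μ : Measure H) [μ.IsMulLeftInvariant] (hint : Integrable (fun g => ρ g) μ) (h : H) :
    ρ h * ∫ g, ρ g ∂μ = ∫ g, ρ g ∂μ := calc
  ρ h * ∫ g, ρ g ∂μ = ∫ g, ρ (h * g) ∂μ := by
    simpa only [ContinuousLinearMap.mul_apply', map_mul] using
      ((ContinuousLinearMap.mul ℂ _ (ρ h)).integral_comp_comm hint).symm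
  _ = ∫ g, ρ g ∂μ := integral_mul_left_eq_self (fun g => ρ g) h

theorem eq_zero_of_forall_apply_eq_self
    (hirr : ∀ W : Submodule ℂ V, (∀ g : H, ∀ v ∈ W, ρ g v ∈ W) → W = ⊥ ∨ W = ⊤)
    (hnontriv : ∃ (g : H) (v : V), ρ g v ≠ v) {v : V} (hv : ∀ g, ρ g v = v) : v = 0 := by
  have hinv : ∀ g : H, ∀ u ∈ fixedSubmodule ⊤ ρ, ρ g u ∈ fixedSubmodule ⊤ ρ :=
    fun g u hu => (hu g trivial).symm ▸ hu
  rcases hirr _ hinv with hbot | htop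
  · exact (Submodule.mem_bot ℂ).1 (hbot ▸ fun g _ => hv g)
  · obtain ⟨g, u, hgu⟩ := hnontriv
    exact absurd ((htop ▸ Submodule.mem_top : u ∈ fixedSubmodule ⊤ ρ) g trivial) hgu

theorem integral_eq_zero_of_irreducible [CompleteSpace V] [MeasurableSpace H] [MeasurableMul H]
    (μ : Measure H) [μ.IsMulLeftInvariant] (hint : Integrable (fun g => ρ g) μ)
    (hirr : ∀ W : Submodule ℂ V, (∀ g : H, ∀ v ∈ W, ρ g v ∈ W) → W = ⊥ ∨ W = ⊤)
    (hnontriv : ∃ (g : H) (v : V), ρ g v ≠ v) :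
    ∫ g, ρ g ∂μ = 0 := by
  ext v
  refine eq_zero_of_forall_apply_eq_self ρ hirr hnontriv fun g => ?_
  rw [← mul_apply_eq_comp, mul_integral_eq_integral ρ μ hint g]

end Representation

section Unitary

variable {H V : Type*} [Group H] [NormedAddCommGroup V] [InnerProductSpace ℂ V]
  (ρ : H →* (V →L[ℂ] V)) {K : Subgroup H} {w : V}

theorem inner_apply_eq_of_mem_fixedSubmodule
    (hunit : ∀ (g : H) (v w : V), ⟪ρ g v, ρ g w⟫_ℂ = ⟪v, w⟫_ℂ)
    (hwK : w ∈ fixedSubmodule K ρ) {k : H} (hk : k ∈ K) (v : V) :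
    ⟪w, ρ k v⟫_ℂ = ⟪w, v⟫_ℂ := calc
  ⟪w, ρ k v⟫_ℂ = ⟪ρ k w, ρ k v⟫_ℂ := by rw [hwK k hk]
  _ = ⟪w, v⟫_ℂ := hunit k w v

theorem eq_inner_smul_of_mem_fixedSubmodule
    (hK : Module.finrank ℂ (fixedSubmodule K ρ) = 1) (hw : ‖w‖ = 1)
    (hwK : w ∈ fixedSubmodule K ρ) {v : V} (hv : v ∈ fixedSubmodule K ρ) :
    v = ⟪w, v⟫_ℂ • w := by
  have hw0 : (⟨w, hwK⟩ : fixedSubmodule K ρ) ≠ 0 := by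
    rw [ne_eq, Submodule.mk_eq_zero, ← norm_eq_zero, hw]
    exact one_ne_zero
  obtain ⟨c, hc⟩ := (finrank_eq_one_iff_of_nonzero' _ hw0).1 hK ⟨v, hv⟩
  have hcv : c • w = v := congrArg Subtype.val hc
  rw [← hcv, inner_smul_right, inner_self_eq_norm_sq_to_K, hw]
  simp

theorem integral_subgroup_apply_eq_inner_smul [CompleteSpace V] [MeasurableSpace K]
    [MeasurableMul K] (ν : Measure K) [ν.IsMulLeftInvariant] [IsProbabilityMeasure ν]
    (hint : Integrable (fun k : K => ρ k) ν)
    (hunit : ∀ (g : H) (v w : V), ⟪ρ g v, ρ g w⟫_ℂ = ⟪v, w⟫_ℂ)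
    (hK : Module.finrank ℂ (fixedSubmodule K ρ) = 1) (hw : ‖w‖ = 1)
    (hwK : w ∈ fixedSubmodule K ρ) (v : V) :
    (∫ k, ρ k ∂ν) v = ⟪w, v⟫_ℂ • w := by
  have hfix : (∫ k, ρ k ∂ν) v ∈ fixedSubmodule K ρ := fun k hk => by
    rw [← mul_apply_eq_comp]
    exact congrArg (· v) (mul_integral_eq_integral (ρ.comp K.subtype) ν hint ⟨k, hk⟩)
  have hinner : ⟪w, (∫ k, ρ k ∂ν) v⟫_ℂ = ⟪w, v⟫_ℂ := calc
    _ = ∫ k : K, ⟪w, ρ k v⟫_ℂ ∂ν := by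
      rw [ContinuousLinearMap.integral_apply hint,
        integral_inner (hint.apply_continuousLinearMap v)]
    _ = ⟪w, v⟫_ℂ := by
      simp [inner_apply_eq_of_mem_fixedSubmodule ρ hunit hwK (Subtype.prop _)]
  rw [eq_inner_smul_of_mem_fixedSubmodule ρ hK hw hwK hfix, hinner]

end Unitary

theorem inductive_construction_of_design_general
    {G : Type*} [Group G] [TopologicalSpace G] [IsTopologicalGroup G]
    [CompactSpace G] [MeasurableSpace G] [BorelSpace G]
    (μ : Measure G) [μ.IsHaarMeasure]
    (K : Subgroup G) [CompactSpace K] [BorelSpace K]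
    (ν : Measure K) [ν.IsHaarMeasure] [IsProbabilityMeasure ν]
    {V : Type*} [NormedAddCommGroup V] [InnerProductSpace ℂ V] [FiniteDimensional ℂ V]
    (ρ : G →* (V →L[ℂ] V)) (hρ : Continuous ρ)
    (hunit : ∀ (g : G) (v w : V), (inner ℂ (ρ g v) (ρ g w) : ℂ) = inner ℂ v w)
    (hirr : ∀ W : Submodule ℂ V, (∀ g : G, ∀ v ∈ W, ρ g v ∈ W) → W = ⊥ ∨ W = ⊤)
    (hnontriv : ∃ (g : G) (v : V), ρ g v ≠ v)
    (hspherical : Module.finrank ℂ (fixedSubmodule K ρ) = 1)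
    (w : V) (hw : ‖w‖ = 1) (hwK : w ∈ fixedSubmodule K ρ)
    (Y : Multiset K) (hY : Y ≠ 0)
    (hYdes : (Y.card : ℂ)⁻¹ • (Y.map fun k : K => ρ (k : G)).sum = ∫ k : K, ρ (k : G) ∂ν)
    (Ω : Multiset G)
    (hzonal : (Ω.map fun z => (inner ℂ w (ρ z w) : ℂ)).sum = 0) :
    ((Y.bind fun y₁ : K => Ω.bind fun z => Y.map fun y₂ : K =>
        (y₁ : G) * z * (y₂ : G)).map fun x => ρ x).sum = 0 ∧
    IsDesign μ ρ (Y.bind fun y₁ : K => Ω.bind fun z => Y.map fun y₂ : K =>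
        (y₁ : G) * z * (y₂ : G)) := by
  have hintG : Integrable (fun g => ρ g) μ :=
    hρ.integrable_of_hasCompactSupport (.of_compactSpace _)
  have hintK : Integrable (fun k : K => ρ k) ν :=
    (hρ.comp continuous_subtype_val).integrable_of_hasCompactSupport (.of_compactSpace _)
  set A := ∫ k : K, ρ k ∂ν
  set C := (Ω.map ρ).sum
  have hA : ∀ v, A v = ⟪w, v⟫_ℂ • w :=
    integral_subgroup_apply_eq_inner_smul ρ ν hintK hunit hspherical hw hwK
  have hB : (Y.map fun k : K => ρ k).sum = (Y.card : ℂ) • A := by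
    rw [← hYdes, smul_inv_smul₀ (by simpa using hY)]
  have hCw : ⟪w, C w⟫_ℂ = 0 := by
    rw [← hzonal, ← Function.comp_def (fun T : V →L[ℂ] V => ⟪w, T w⟫_ℂ) ρ,
      ← Multiset.map_map]
    exact map_multiset_sum ((innerSL ℂ w).comp (.apply ℂ V w)) (Ω.map ρ)
  have hACA : A * C * A = 0 := by
    ext v
    simp [mul_apply_eq_comp, hA, hCw]
  have hX : ((Y.bind fun y₁ : K => Ω.bind fun z => Y.map fun y₂ : K =>
      (y₁ : G) * z * (y₂ : G)).map fun x => ρ x).sum = 0 := by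
    simp only [Multiset.map_bind, Multiset.map_map, Function.comp_def, map_mul]
    rw [Multiset.sum_bind_bind_map_mul_mul, hB]
    change (Y.card : ℂ) • A * C * (Y.card : ℂ) • A = 0
    rw [smul_mul_assoc, smul_mul_assoc, mul_smul_comm, hACA, smul_zero, smul_zero]
  refine ⟨hX, ?_⟩
  rw [IsDesign, hX, smul_zero, integral_eq_zero_of_irreducible ρ μ hintG hirr hnontriv]

theorem inductive_construction_of_design
    {G : Type*} [Group G] [TopologicalSpace G] [IsTopologicalGroup G]
    [CompactSpace G] [T2Space G] [MeasurableSpace G] [BorelSpace G]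
    (μ : Measure G) [μ.IsHaarMeasure] [IsProbabilityMeasure μ]
    (K : Subgroup G) (hK : IsClosed (K : Set G)) [CompactSpace K] [BorelSpace K]
    (ν : Measure K) [ν.IsHaarMeasure] [IsProbabilityMeasure ν]
    {V : Type*} [NormedAddCommGroup V] [InnerProductSpace ℂ V] [FiniteDimensional ℂ V]
    [Nontrivial V]
    (ρ : G →* (V →L[ℂ] V)) (hρ : Continuous ρ)
    (hunit : ∀ (g : G) (v w : V), (inner ℂ (ρ g v) (ρ g w) : ℂ) = inner ℂ v w)
    (hirr : ∀ W : Submodule ℂ V, (∀ g : G, ∀ v ∈ W, ρ g v ∈ W) → W = ⊥ ∨ W = ⊤)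
    (hnontriv : ∃ (g : G) (v : V), ρ g v ≠ v)
    (hspherical : Module.finrank ℂ (fixedSubmodule K ρ) = 1)
    (w : V) (hw : ‖w‖ = 1) (hwK : w ∈ fixedSubmodule K ρ)
    (Y : Multiset K) (hY : Y ≠ 0)
    (hYdes : (Y.card : ℂ)⁻¹ • (Y.map fun k : K => ρ (k : G)).sum = ∫ k : K, ρ (k : G) ∂ν)
    (Ω : Multiset G) (hΩ : Ω ≠ 0)
    (hzonal : (Ω.map fun z => (inner ℂ w (ρ z w) : ℂ)).sum = 0) :
    ((Y.bind fun y₁ : K => Ω.bind fun z => Y.map fun y₂ : K =>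
        (y₁ : G) * z * (y₂ : G)).map fun x => ρ x).sum = 0 ∧
    IsDesign μ ρ (Y.bind fun y₁ : K => Ω.bind fun z => Y.map fun y₂ : K =>
        (y₁ : G) * z * (y₂ : G)) :=
  inductive_construction_of_design_general μ K ν ρ hρ hunit hirr hnontriv hspherical w hw hwK Y hY
    hYdes Ω hzonal
end
end

section
/- Let G be a compact group and, for i = 1,…,l, let Υ_i be a collection of finite-dimensional continuous representations of G, Y a nonempty finite multiset on G, and Ω_i nonempty finite multisets on G such that Y · Ω_i · Y is a Υ_i-design on G for each i. Then the product multiset Y · Ω₁ · Y · Ω₂ · Y ⋯ Ω_l · Y is a (⋃_{i=1}^l Υ_i)-design on G. -/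
open MeasureTheory

noncomputable section

/-- The product `A · B = { ab : a ∈ A, b ∈ B }` of two finite multisets with multiplicities. -/
def msMul {G : Type*} [Mul G] (A B : Multiset G) : Multiset G :=
  A.bind fun a => B.map fun b => a * b

/-! Averaging a representation over a product of multisets gives the product of the averages.
By invariance of Haar measure, `P = ∫ ρ` is absorbed on both sides by every `ρ g`, hence by the
average over any nonempty multiset. In `Y Ω₁ Y ⋯ Ω_l Y` the factor `Y Ωᵢ Y` averages to `P` and
absorbs all the others. -/

section Absorbers

variable {M : Type*} [Monoid M]

def absorbers (P : M) : Submonoid M where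
  carrier := {m | m * P = P ∧ P * m = P}
  one_mem' := ⟨one_mul P, mul_one P⟩
  mul_mem' := fun {a b} ha hb => ⟨by rw [mul_assoc, hb.1, ha.1], by rw [← mul_assoc, ha.2, hb.2]⟩

theorem mul_prod_ofFn_mul_eq {P y : M} (hy : y ∈ absorbers P) :
    ∀ {l : ℕ} (w : Fin l → M), (∀ k, w k ∈ absorbers P) → ∀ i, y * w i * y = P →
      y * (List.ofFn fun k => w k * y).prod = P
  | 0, _, _, i, _ => i.elim0
  | l + 1, w, hw, i, hi => by
    rw [List.ofFn_succ, List.prod_cons]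
    induction i using Fin.cases with
    | zero =>
      have hrest : (List.ofFn fun k : Fin l => w k.succ * y).prod ∈ absorbers P :=
        Submonoid.list_prod_mem _ (by simpa using fun k : Fin l => mul_mem (hw k.succ) hy)
      rw [← mul_assoc, ← mul_assoc, hi, hrest.2]
    | succ i =>
      rw [mul_assoc, mul_prod_ofFn_mul_eq hy (fun k => w k.succ) (fun k => hw k.succ) i hi,
        (hw 0).1, hy.1]

end Absorbers

section Average

variable (𝕜 : Type*) {G A : Type*} [Monoid G] [Semifield 𝕜] [Semiring A] [Algebra 𝕜 A]

-- The average over `0` is `0` (as `0⁻¹ = 0`), so `average_msMul` needs no nonemptiness.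
def Multiset.average (ρ : G →* A) (X : Multiset G) : A :=
  (X.card : 𝕜)⁻¹ • (X.map ρ).sum

variable {𝕜}

theorem card_msMul (X Y : Multiset G) : (msMul X Y).card = X.card * Y.card := by
  simp [msMul, Multiset.card_bind]

theorem sum_map_msMul (ρ : G →* A) (X Y : Multiset G) :
    ((msMul X Y).map ρ).sum = (X.map ρ).sum * (Y.map ρ).sum := by
  simp [msMul, Multiset.map_bind, Multiset.sum_bind, Multiset.sum_map_mul_left,
    Multiset.sum_map_mul_right]

theorem average_msMul (ρ : G →* A) (X Y : Multiset G) :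
    (msMul X Y).average 𝕜 ρ = X.average 𝕜 ρ * Y.average 𝕜 ρ := by
  simp only [Multiset.average, card_msMul, sum_map_msMul, Nat.cast_mul, mul_inv,
    smul_mul_smul_comm]

theorem average_foldl_msMul (ρ : G →* A) (L : List (Multiset G)) (X : Multiset G) :
    (L.foldl msMul X).average 𝕜 ρ = X.average 𝕜 ρ * (L.map (Multiset.average 𝕜 ρ)).prod := by
  induction L generalizing X with
  | nil => simp
  | cons Y L ih =>
    rw [List.foldl_cons, ih, average_msMul, List.map_cons, List.prod_cons, mul_assoc]

theorem average_mem_absorbers [CharZero 𝕜] {ρ : G →* A} {P : A} (hρ : ∀ g, ρ g ∈ absorbers P)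
    {X : Multiset G} (hX : X ≠ 0) : X.average 𝕜 ρ ∈ absorbers P := by
  have hcard : (X.card : 𝕜) ≠ 0 := by simpa using hX
  constructor
  · rw [Multiset.average, smul_mul_assoc, ← Multiset.sum_map_mul_right,
      Multiset.map_congr rfl fun g _ => (hρ g).1, Multiset.map_const', Multiset.sum_replicate,
      ← Nat.cast_smul_eq_nsmul 𝕜, smul_smul, inv_mul_cancel₀ hcard, one_smul]
  · rw [Multiset.average, mul_smul_comm, ← Multiset.sum_map_mul_left,
      Multiset.map_congr rfl fun g _ => (hρ g).2, Multiset.map_const', Multiset.sum_replicate,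
      ← Nat.cast_smul_eq_nsmul 𝕜, smul_smul, inv_mul_cancel₀ hcard, one_smul]

end Average

theorem mem_absorbers_integral {G A : Type*} [Group G] [TopologicalSpace G] [CompactSpace G]
    [MeasurableSpace G] [OpensMeasurableSpace G] [MeasurableMul G] (μ : Measure G)
    [IsFiniteMeasureOnCompacts μ] [μ.IsMulLeftInvariant] [μ.IsMulRightInvariant]
    [NormedRing A] [NormedAlgebra ℝ A] {ρ : G →* A} (hρ : Continuous ρ) (g : G) :
    ρ g ∈ absorbers (∫ x, ρ x ∂μ) := by
  have hint : Integrable (fun x => ρ x) μ :=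
    hρ.integrable_of_hasCompactSupport (HasCompactSupport.of_compactSpace _)
  constructor
  · rw [← integral_const_mul_of_integrable hint]
    simp_rw [← map_mul]
    exact integral_mul_left_eq_self (fun x => ρ x) g
  · rw [← integral_mul_const_of_integrable hint]
    simp_rw [← map_mul]
    exact integral_mul_right_eq_self (fun x => ρ x) g

theorem isDesign_iff_average_eq {G V : Type*} [Group G] [TopologicalSpace G] [MeasurableSpace G]
    [NormedAddCommGroup V] [NormedSpace ℂ V] (μ : Measure G) (ρ : G →* (V →L[ℂ] V))
    (X : Multiset G) : IsDesign μ ρ X ↔ X.average ℂ ρ = ∫ g, ρ g ∂μ :=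
  Iff.rfl

theorem chain_product_is_union_design_general
    {G : Type*} [Group G] [TopologicalSpace G] [IsTopologicalGroup G]
    [CompactSpace G] [MeasurableSpace G] [BorelSpace G]
    (μ : Measure G) [μ.IsHaarMeasure] [μ.IsMulRightInvariant]
    {ι : Type*} {V : ι → Type*}
    [∀ j, NormedAddCommGroup (V j)] [∀ j, NormedSpace ℂ (V j)]
    (ρ : ∀ j, G →* (V j →L[ℂ] V j)) (hρ : ∀ j, Continuous (ρ j))
    (l : ℕ) (Υ : Fin l → Set ι)
    (Y : Multiset G) (hY : Y ≠ 0)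
    (Ω : Fin l → Multiset G) (hΩ : ∀ i, Ω i ≠ 0)
    (hdes : ∀ i : Fin l, ∀ j ∈ Υ i, IsDesign μ (ρ j) (msMul (msMul Y (Ω i)) Y)) :
    ∀ j ∈ ⋃ i, Υ i,
      IsDesign μ (ρ j) ((List.ofFn fun i => msMul (Ω i) Y).foldl msMul Y) := by
  intro j hj
  obtain ⟨i, hi⟩ := Set.mem_iUnion.mp hj
  have hP := mem_absorbers_integral μ (hρ j)
  have hmiddle := hdes i j hi
  rw [isDesign_iff_average_eq, average_msMul, average_msMul] at hmiddle
  rw [isDesign_iff_average_eq, average_foldl_msMul, List.map_ofFn]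
  simp only [Function.comp_def, average_msMul]
  exact mul_prod_ofFn_mul_eq (average_mem_absorbers hP hY) _
    (fun k => average_mem_absorbers hP (hΩ k)) i hmiddle

theorem chain_product_is_union_design
    {G : Type*} [Group G] [TopologicalSpace G] [IsTopologicalGroup G]
    [CompactSpace G] [T2Space G] [MeasurableSpace G] [BorelSpace G]
    (μ : Measure G) [μ.IsHaarMeasure] [μ.IsMulRightInvariant] [IsProbabilityMeasure μ]
    {ι : Type*} {V : ι → Type*}
    [∀ j, NormedAddCommGroup (V j)] [∀ j, NormedSpace ℂ (V j)]
    [∀ j, FiniteDimensional ℂ (V j)]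
    (ρ : ∀ j, G →* (V j →L[ℂ] V j)) (hρ : ∀ j, Continuous (ρ j))
    (l : ℕ) (Υ : Fin l → Set ι)
    (Y : Multiset G) (hY : Y ≠ 0)
    (Ω : Fin l → Multiset G) (hΩ : ∀ i, Ω i ≠ 0)
    (hdes : ∀ i : Fin l, ∀ j ∈ Υ i, IsDesign μ (ρ j) (msMul (msMul Y (Ω i)) Y)) :
    ∀ j ∈ ⋃ i, Υ i,
      IsDesign μ (ρ j) ((List.ofFn fun i => msMul (Ω i) Y).foldl msMul Y) :=
  chain_product_is_union_design_general μ ρ hρ l Υ Y hY Ω hΩ hdes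
end
end
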